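/- arXiv:2408.15303 — 2 statements merged into one kernel-verified Lean document; each statement's English description precedes it below -/
import Mathlib

section
/- For every integer m ≥ 5, the constant Θ_m m^(1/3) ≥ 1, where Θ_m = (Γ((3m-5)/2)/Γ(m-2)) · (4/3)^(m-2) · 2/(m · π^((m-1)/2)). -/
/-!
`Θ_m ≥ 1` holds already without the factor `m^(1/3) ≥ 1`. Reading `Θ` as a function of a real
variable, the functional equation of `Γ` gives
`Θ(x + 2) = Θ(x) · 2x(3x - 5)(3x - 1) / (3π(x - 2)(x + 2))`, and this factor is at least `1` for
`x > 2` because `π < 4`. So `Θ` increases along `m, m + 2, …` and it suffices to check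
`Θ_5 = 512 / (45π²)` and `Θ_6 = 2310 / (81π²)`, both `≥ 1` since `π² < 10`.
-/

open Real

noncomputable def theta (x : ℝ) : ℝ :=
  Gamma ((3 * x - 5) / 2) / Gamma (x - 2) * (4 / 3 : ℝ) ^ (x - 2) * (2 / (x * π ^ ((x - 1) / 2)))

lemma theta_pos {x : ℝ} (hx : 2 < x) : 0 < theta x := by
  have := Gamma_pos_of_pos (by linarith : 0 < (3 * x - 5) / 2)
  have := Gamma_pos_of_pos (by linarith : 0 < x - 2)
  have : 0 < x := by linarith
  unfold theta
  positivity

lemma theta_add_two {x : ℝ} (hx : 2 < x) :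
    theta (x + 2) =
      theta x * (2 * x * (3 * x - 5) * (3 * x - 1) / (3 * π * (x - 2) * (x + 2))) := by
  have hΓnum : Gamma ((3 * (x + 2) - 5) / 2) =
      (3 * x - 1) / 2 * (3 * x - 3) / 2 * (3 * x - 5) / 2 * Gamma ((3 * x - 5) / 2) := by
    rw [show (3 * (x + 2) - 5) / 2 = (3 * x - 5) / 2 + 1 + 1 + 1 by ring,
      Gamma_add_one (ne_of_gt (by linarith)), Gamma_add_one (ne_of_gt (by linarith)),
      Gamma_add_one (ne_of_gt (by linarith))]
    ring
  have hΓden : Gamma (x + 2 - 2) = (x - 1) * (x - 2) * Gamma (x - 2) := by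
    rw [show x + 2 - 2 = x - 2 + 1 + 1 by ring, Gamma_add_one (ne_of_gt (by linarith)),
      Gamma_add_one (ne_of_gt (by linarith))]
    ring
  have hpow : (4 / 3 : ℝ) ^ (x + 2 - 2) = (4 / 3) ^ (x - 2) * (16 / 9) := by
    rw [show x + 2 - 2 = x - 2 + 2 by ring, rpow_add (by norm_num)]
    norm_num
  have hpi : π ^ ((x + 2 - 1) / 2) = π ^ ((x - 1) / 2) * π := by
    rw [show (x + 2 - 1) / 2 = (x - 1) / 2 + 1 by ring, rpow_add pi_pos, rpow_one]
  have := (Gamma_pos_of_pos (by linarith : 0 < x - 2)).ne'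
  have := (rpow_pos_of_pos pi_pos ((x - 1) / 2)).ne'
  have := pi_pos.ne'
  have : x - 1 ≠ 0 := by apply ne_of_gt; linarith
  have : x - 2 ≠ 0 := by apply ne_of_gt; linarith
  have : x + 2 ≠ 0 := by apply ne_of_gt; linarith
  have : x ≠ 0 := by apply ne_of_gt; linarith
  unfold theta
  rw [hΓnum, hΓden, hpow, hpi]
  field_simp
  ring

lemma one_le_theta_ratio {x : ℝ} (hx : 2 < x) :
    1 ≤ 2 * x * (3 * x - 5) * (3 * x - 1) / (3 * π * (x - 2) * (x + 2)) := by
  have hden : 0 < 3 * π * (x - 2) * (x + 2) := by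
    have := pi_pos
    have : 0 < x - 2 := by linarith
    positivity
  rw [one_le_div hden]
  have hpi : 3 * π * (x - 2) * (x + 2) ≤ 12 * (x - 2) * (x + 2) := by
    have : 0 < (x - 2) * (x + 2) := by nlinarith
    nlinarith [pi_lt_four]
  nlinarith [mul_pos (sub_pos.2 hx) (sub_pos.2 hx), pow_pos (sub_pos.2 hx) 3]

lemma theta_le_theta_add_two {x : ℝ} (hx : 2 < x) : theta x ≤ theta (x + 2) := by
  rw [theta_add_two hx]
  exact le_mul_of_one_le_right (theta_pos hx).le (one_le_theta_ratio hx)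

lemma theta_five : theta 5 = 512 / (45 * π ^ 2) := by
  have hnum : Gamma ((3 * 5 - 5) / 2) = 24 := by
    rw [show (3 * 5 - 5) / 2 = ((4 : ℕ) : ℝ) + 1 by norm_num, Gamma_nat_eq_factorial]
    norm_num [Nat.factorial]
  have hden : Gamma (5 - 2) = 2 := by
    rw [show (5 : ℝ) - 2 = ((2 : ℕ) : ℝ) + 1 by norm_num, Gamma_nat_eq_factorial]
    norm_num [Nat.factorial]
  have hpow : (4 / 3 : ℝ) ^ ((5 : ℝ) - 2) = 64 / 27 := by
    rw [show (5 : ℝ) - 2 = ((3 : ℕ) : ℝ) by norm_num, rpow_natCast]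
    norm_num
  have hpi : π ^ (((5 : ℝ) - 1) / 2) = π ^ 2 := by
    rw [show ((5 : ℝ) - 1) / 2 = ((2 : ℕ) : ℝ) by norm_num, rpow_natCast]
  unfold theta
  rw [hnum, hden, hpow, hpi]
  field_simp
  ring

lemma theta_six : theta 6 = 2310 / (81 * π ^ 2) := by
  have hnum : Gamma ((3 * 6 - 5) / 2) = 10395 / 64 * √π := by
    rw [show (3 * 6 - 5) / 2 = (1 / 2 : ℝ) + 1 + 1 + 1 + 1 + 1 + 1 by norm_num]
    repeat rw [Gamma_add_one (by norm_num)]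
    rw [Gamma_one_half_eq]
    ring
  have hden : Gamma (6 - 2) = 6 := by
    rw [show (6 : ℝ) - 2 = ((3 : ℕ) : ℝ) + 1 by norm_num, Gamma_nat_eq_factorial]
    norm_num [Nat.factorial]
  have hpow : (4 / 3 : ℝ) ^ ((6 : ℝ) - 2) = 256 / 81 := by
    rw [show (6 : ℝ) - 2 = ((4 : ℕ) : ℝ) by norm_num, rpow_natCast]
    norm_num
  have hpi : π ^ (((6 : ℝ) - 1) / 2) = π ^ 2 * √π := by
    rw [show ((6 : ℝ) - 1) / 2 = ((2 : ℕ) : ℝ) + 1 / 2 by norm_num, rpow_add pi_pos,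
      rpow_natCast, sqrt_eq_rpow]
  have := (sqrt_pos.2 pi_pos).ne'
  unfold theta
  rw [hnum, hden, hpow, hpi]
  field_simp
  ring

lemma one_le_theta_natCast {m : ℕ} (hm : 5 ≤ m) : 1 ≤ theta m := by
  suffices 1 ≤ theta m ∧ 1 ≤ theta (m + 1) from this.1
  induction m, hm using Nat.le_induction with
  | base =>
    rw [show ((5 : ℕ) : ℝ) + 1 = 6 by norm_num, Nat.cast_ofNat, theta_five, theta_six]
    constructor <;> rw [one_le_div (by positivity)] <;> nlinarith [pi_lt_d2, pi_pos]
  | succ m hm ih =>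
    refine ⟨by exact_mod_cast ih.2, ?_⟩
    have := theta_le_theta_add_two (by norm_cast; omega : (2 : ℝ) < m)
    push_cast
    rw [add_assoc, one_add_one_eq_two]
    exact ih.1.trans this

theorem stmt6 (m : ℕ) (hm : 5 ≤ m) :
    1 ≤ (Real.Gamma ((3 * (m : ℝ) - 5) / 2) / Real.Gamma ((m : ℝ) - 2)) *
        (4 / 3 : ℝ) ^ ((m : ℝ) - 2) *
        (2 / ((m : ℝ) * Real.pi ^ (((m : ℝ) - 1) / 2))) * (m : ℝ) ^ ((1 : ℝ) / 3) :=
  one_le_mul_of_one_le_of_one_le (one_le_theta_natCast hm)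
    (one_le_rpow (by exact_mod_cast (by omega : 1 ≤ m)) (by norm_num))
end

section
/- For positive reals α, β and m ≤ k, the sequence H_k = (Θ · k^(1/3) · y^(k-1) / ∏_{s=m}^{k-1} ln(y/√s))^(1/(3k-3)) satisfies: there exists y₀ such that for all y > y₀, H_k ≥ H_{k+1} for all m ≤ k < L. Equivalently, log H_k - log H_{k+1} ≥ Θ₁ + [log(log(y/√k)/log(y/√m)) + (m-1)·log log(y/√k)]/(3k(k-1)) with Θ₁ independent of y, and this lower bound tends to +∞ as y → ∞. -/
/-! With `t = log y`, every factor `log (y / √s)` with `1 ≤ s ≤ y` lies in `[t/2, t]`. Raising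
`H_{k+1} ≤ H_k` to the power `3k(k-1)` cancels the powers of `y` and leaves
`((k+1)^{1/3})^{k-1} ∏_{s=m}^{k-1} log (y/√s) ≤ Θ (k^{1/3})^k log (y/√k)^{k-1}`, whose left side
is `O(t^{k-m})` and whose right side is of exact order `t^{k-1}`. As `m ≥ 2`, it holds once `t` is
large, and there are only finitely many `k < L`. -/

open Real Filter Finset

noncomputable def H (Θ y : ℝ) (m k : ℕ) : ℝ :=
  (Θ * (k : ℝ) ^ ((1 : ℝ) / 3) * y ^ (k - 1) / ∏ s ∈ Ico m k, log (y / √(s : ℝ))) ^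
    ((1 : ℝ) / ((3 * k - 3 : ℕ) : ℝ))

lemma rpow_one_div_le_rpow_one_div_of_pow_le {a b : ℝ} {p q : ℕ} (ha : 0 ≤ a) (hb : 0 ≤ b)
    (hp : 0 < p) (hq : 0 < q) (h : a ^ p ≤ b ^ q) : a ^ (1 / (q : ℝ)) ≤ b ^ (1 / (p : ℝ)) := by
  have root {c : ℝ} (hc : 0 ≤ c) (r s : ℕ) (hr : 0 < r) :
      c ^ (1 / (s : ℝ)) = (c ^ r) ^ (1 / ((r : ℝ) * s)) := by
    rw [← rpow_natCast, ← rpow_mul hc]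
    congr 1
    field_simp
  rw [root ha p q hp, root hb q p hq, mul_comm (q : ℝ)]
  exact rpow_le_rpow (pow_nonneg ha p) h (by positivity)

lemma log_div_sqrt {y s : ℝ} (hy : 0 < y) (hs : 0 < s) : log (y / √s) = log y - log s / 2 := by
  rw [log_div hy.ne' (sqrt_pos.2 hs).ne', log_sqrt hs.le]

lemma log_div_sqrt_le {y s : ℝ} (hy : 0 < y) (hs : 1 ≤ s) : log (y / √s) ≤ log y := by
  rw [log_div_sqrt hy (by linarith)]
  linarith [log_nonneg hs]

lemma half_log_le_log_div_sqrt {y s : ℝ} (hs : 1 ≤ s) (hsy : s ≤ y) :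
    log y / 2 ≤ log (y / √s) := by
  rw [log_div_sqrt (by linarith) (by linarith)]
  linarith [log_le_log (by linarith) hsy]

section LogProduct

variable {m k : ℕ} {y : ℝ}

lemma log_div_sqrt_mem_Ioc (hm : 1 ≤ m) (hky : (k : ℝ) ≤ y) {s : ℕ} (hs : s ∈ Ico m k) :
    log (y / √(s : ℝ)) ∈ Set.Ioc 0 (log y) := by
  obtain ⟨hms, hsk⟩ := mem_Ico.1 hs
  have hs1 : (1 : ℝ) ≤ s := by exact_mod_cast hm.trans hms
  have hsy : (s : ℝ) < y := lt_of_lt_of_le (by exact_mod_cast hsk) hky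
  have hy : 0 < log y := log_pos (by linarith)
  exact ⟨by linarith [half_log_le_log_div_sqrt hs1 hsy.le], log_div_sqrt_le (by linarith) hs1⟩

lemma prod_log_div_sqrt_pos (hm : 1 ≤ m) (hky : (k : ℝ) ≤ y) :
    0 < ∏ s ∈ Ico m k, log (y / √(s : ℝ)) :=
  prod_pos fun _ hs => (log_div_sqrt_mem_Ioc hm hky hs).1

lemma prod_log_div_sqrt_le (hm : 1 ≤ m) (hky : (k : ℝ) ≤ y) :
    ∏ s ∈ Ico m k, log (y / √(s : ℝ)) ≤ log y ^ (k - m) := by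
  calc ∏ s ∈ Ico m k, log (y / √(s : ℝ)) ≤ ∏ _s ∈ Ico m k, log y :=
        prod_le_prod (fun _ hs => (log_div_sqrt_mem_Ioc hm hky hs).1.le)
          fun _ hs => (log_div_sqrt_mem_Ioc hm hky hs).2
    _ = log y ^ (k - m) := by rw [prod_const, Nat.card_Ico]

end LogProduct

lemma pow_mul_prod_log_div_sqrt_le {m k : ℕ} {Θ y : ℝ} (hm : 2 ≤ m) (hmk : m ≤ k) (hΘ : 0 < Θ)
    (hky : (k : ℝ) ≤ y) (ht : 1 ≤ log y) (hΘt : (2 * ((k : ℝ) + 1)) ^ (k - 1) ≤ Θ * log y) :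
    ((k : ℝ) + 1) ^ (k - 1) * ∏ s ∈ Ico m k, log (y / √(s : ℝ)) ≤
      Θ * log (y / √(k : ℝ)) ^ (k - 1) := by
  obtain ⟨j, rfl⟩ : ∃ j, k = j + 1 := ⟨k - 1, by omega⟩
  simp only [Nat.add_sub_cancel] at *
  set t := log y
  have hℓ : t / 2 ≤ log (y / √((j + 1 : ℕ) : ℝ)) :=
    half_log_le_log_div_sqrt (by norm_cast; omega) hky
  have hP : ∏ s ∈ Ico m (j + 1), log (y / √(s : ℝ)) ≤ t ^ (j - 1) :=
    (prod_log_div_sqrt_le (by omega) hky).trans (pow_le_pow_right₀ ht (by omega))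
  have hj : t ^ j = t * t ^ (j - 1) := by rw [← pow_succ']; congr 1; omega
  calc ((j + 1 : ℕ) + 1 : ℝ) ^ j * ∏ s ∈ Ico m (j + 1), log (y / √(s : ℝ))
      ≤ ((j + 1 : ℕ) + 1 : ℝ) ^ j * t ^ (j - 1) := by gcongr
    _ = (2 * ((j + 1 : ℕ) + 1 : ℝ)) ^ j * t ^ (j - 1) / 2 ^ j := by rw [mul_pow]; field_simp
    _ ≤ Θ * t * t ^ (j - 1) / 2 ^ j := by gcongr
    _ = Θ * (t / 2) ^ j := by rw [div_pow, hj]; ring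
    _ ≤ Θ * log (y / √((j + 1 : ℕ) : ℝ)) ^ j := by gcongr

lemma div_pow_le_div_pow_succ {Θ a b y P ℓ : ℝ} (n : ℕ) (hΘ : 0 ≤ Θ) (hy : 0 ≤ y)
    (hP : 0 < P) (hℓ : 0 < ℓ) (h : a ^ n * P ≤ Θ * b ^ (n + 1) * ℓ ^ n) :
    (Θ * a * y ^ (n + 1) / (P * ℓ)) ^ n ≤ (Θ * b * y ^ n / P) ^ (n + 1) := by
  rw [div_pow, div_pow, div_le_div_iff₀ (by positivity) (by positivity)]
  set c := Θ ^ n * (y ^ (n + 1)) ^ n * P ^ n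
  calc (Θ * a * y ^ (n + 1)) ^ n * P ^ (n + 1) = c * (a ^ n * P) := by ring
    _ ≤ c * (Θ * b ^ (n + 1) * ℓ ^ n) := by gcongr
    _ = (Θ * b * y ^ n) ^ (n + 1) * (P * ℓ) ^ n := by ring

lemma H_succ_le {m k : ℕ} {Θ y : ℝ} (hm : 2 ≤ m) (hmk : m ≤ k) (hΘ : 0 < Θ) (hky : (k : ℝ) ≤ y)
    (ht : 1 ≤ log y) (hΘt : (2 * ((k : ℝ) + 1)) ^ (k - 1) ≤ Θ * log y) :
    H Θ y m (k + 1) ≤ H Θ y m k := by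
  have hcore := pow_mul_prod_log_div_sqrt_le hm hmk hΘ hky ht hΘt
  obtain ⟨j, rfl⟩ : ∃ j, k = j + 1 := ⟨k - 1, by omega⟩
  simp only [Nat.add_sub_cancel] at hcore
  have hy : 0 < y := lt_of_lt_of_le (by positivity) hky
  set P := ∏ s ∈ Ico m (j + 1), log (y / √(s : ℝ))
  set ℓ := log (y / √((j + 1 : ℕ) : ℝ))
  have hP : 0 < P := prod_log_div_sqrt_pos (by omega) hky
  have hℓ : 0 < ℓ := by
    linarith [half_log_le_log_div_sqrt (s := ((j + 1 : ℕ) : ℝ)) (by norm_cast; omega) hky]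
  have hsplit : ∏ s ∈ Ico m (j + 1 + 1), log (y / √(s : ℝ)) = P * ℓ :=
    prod_Ico_succ_top (by omega) _
  set a := (((j + 1 + 1 : ℕ) : ℝ)) ^ ((1 : ℝ) / 3)
  set b := (((j + 1 : ℕ) : ℝ)) ^ ((1 : ℝ) / 3)
  have hb : 1 ≤ b := one_le_rpow (by norm_cast; omega) (by norm_num)
  have ha' : a ≤ ((j + 1 : ℕ) : ℝ) + 1 :=
    (rpow_le_self_of_one_le (by norm_cast; omega) (by norm_num)).trans_eq (by push_cast; ring)
  have hab : a ^ j * P ≤ Θ * b ^ (j + 1) * ℓ ^ j :=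
    calc a ^ j * P ≤ (((j + 1 : ℕ) : ℝ) + 1) ^ j * P := by gcongr
      _ ≤ Θ * ℓ ^ j := hcore
      _ = Θ * 1 ^ (j + 1) * ℓ ^ j := by ring
      _ ≤ Θ * b ^ (j + 1) * ℓ ^ j := by gcongr
  unfold H
  rw [hsplit, show 3 * (j + 1 + 1) - 3 = 3 * (j + 1) by omega,
    show 3 * (j + 1) - 3 = 3 * j by omega, Nat.add_sub_cancel, Nat.add_sub_cancel]
  apply rpow_one_div_le_rpow_one_div_of_pow_le (by positivity) (by positivity) (by omega) (by omega)
  rw [pow_mul', pow_mul']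
  exact pow_le_pow_left₀ (by positivity)
    (div_pow_le_div_pow_succ j hΘ.le hy.le hP hℓ hab) 3

lemma eventually_H_succ_le {m k : ℕ} {Θ : ℝ} (hm : 2 ≤ m) (hmk : m ≤ k) (hΘ : 0 < Θ) :
    ∀ᶠ y in atTop, H Θ y m (k + 1) ≤ H Θ y m k := by
  filter_upwards [eventually_ge_atTop (k : ℝ), tendsto_log_atTop.eventually_ge_atTop 1,
    tendsto_log_atTop.eventually_ge_atTop ((2 * ((k : ℝ) + 1)) ^ (k - 1) / Θ)] with y hky ht hΘt
  exact H_succ_le hm hmk hΘ hky ht (by rwa [div_le_iff₀' hΘ] at hΘt)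

theorem stmt14_general (m L : ℕ) (hm : 5 ≤ m) (Θ : ℝ) (hΘ : 0 < Θ) :
    ∃ y₀ : ℝ, Real.sqrt ((L : ℝ) - 1) ≤ y₀ ∧ ∀ y : ℝ, y₀ < y → ∀ k, m ≤ k → k < L →
      (Θ * ((k : ℝ) + 1) ^ ((1 : ℝ) / 3) * y ^ (k + 1 - 1) /
          ∏ s ∈ Finset.Ico m (k + 1), Real.log (y / Real.sqrt (s : ℝ))) ^
        ((1 : ℝ) / ((3 * (k + 1) - 3 : ℕ) : ℝ))
      ≤ (Θ * (k : ℝ) ^ ((1 : ℝ) / 3) * y ^ (k - 1) /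
          ∏ s ∈ Finset.Ico m k, Real.log (y / Real.sqrt (s : ℝ))) ^
        ((1 : ℝ) / ((3 * k - 3 : ℕ) : ℝ)) := by
  have hH : ∀ᶠ y in atTop, ∀ k ∈ Ico m L, H Θ y m (k + 1) ≤ H Θ y m k :=
    (eventually_all_finset _).2 fun k hk => eventually_H_succ_le (by omega) (mem_Ico.1 hk).1 hΘ
  obtain ⟨y₁, hy₁⟩ := eventually_atTop.1 hH
  refine ⟨max √((L : ℝ) - 1) y₁, le_max_left _ _, fun y hy k hmk hkL => ?_⟩
  have hk := hy₁ y ((le_max_right _ _).trans hy.le) k (mem_Ico.2 ⟨hmk, hkL⟩)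
  rwa [H, H, Nat.cast_succ] at hk

theorem stmt14 (m L : ℕ) (hm : 5 ≤ m) (hmL : m < L) (Θ : ℝ) (hΘ : 0 < Θ) :
    ∃ y₀ : ℝ, Real.sqrt ((L : ℝ) - 1) ≤ y₀ ∧ ∀ y : ℝ, y₀ < y → ∀ k, m ≤ k → k < L →
      (Θ * ((k : ℝ) + 1) ^ ((1 : ℝ) / 3) * y ^ (k + 1 - 1) /
          ∏ s ∈ Finset.Ico m (k + 1), Real.log (y / Real.sqrt (s : ℝ))) ^
        ((1 : ℝ) / ((3 * (k + 1) - 3 : ℕ) : ℝ))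
      ≤ (Θ * (k : ℝ) ^ ((1 : ℝ) / 3) * y ^ (k - 1) /
          ∏ s ∈ Finset.Ico m k, Real.log (y / Real.sqrt (s : ℝ))) ^
        ((1 : ℝ) / ((3 * k - 3 : ℕ) : ℝ)) :=
  stmt14_general m L hm Θ hΘ
end
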